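/- arXiv:2105.13055 — 5 statements merged into one kernel-verified Lean document; each statement's English description precedes it below -/
import Mathlib

section
/- Let c be a prefix-compatible and finite cost function on a temporal graph 𝒢. Then no c-optimal temporal walk visits the same vertex appearance (v,t) twice. -/
open scoped Classical

/-- A time arc `(u, v, t)`: a transition from vertex `u` to vertex `v` at time step `t`. -/
abbrev TArc (V : Type*) := V × V × ℕ

/-- A directed temporal graph `𝒢 = (V, ℰ, T)`: the time arcs connect distinct vertices
and carry time labels in `[T] = {1, …, T}`. -/
structure TemporalGraph (V : Type*) where
  lifetime : ℕ
  arcs : Set (TArc V)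
  arcs_valid : ∀ e ∈ arcs, e.1 ≠ e.2.1 ∧ 1 ≤ e.2.2 ∧ e.2.2 ≤ lifetime

namespace TemporalGraph

variable {V : Type*}

/-- `L` is a temporal walk of `G`: a nonempty sequence of time arcs of `G` in which the
endpoint of each arc is the starting point of the next one, with non-decreasing labels. -/
def IsTWalk (G : TemporalGraph V) (L : List (TArc V)) : Prop :=
  L ≠ [] ∧ (∀ e ∈ L, e ∈ G.arcs) ∧ L.Chain' fun e f => e.2.1 = f.1 ∧ e.2.2 ≤ f.2.2

/-- The walk `L` starts at vertex `s`. -/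
def StartsAt (s : V) (L : List (TArc V)) : Prop := ∃ e ∈ L.head?, e.1 = s

/-- The walk `L` ends at vertex `z`. -/
def EndsAt (z : V) (L : List (TArc V)) : Prop := ∃ e ∈ L.getLast?, e.2.1 = z

/-- The walk `L` ends at the vertex appearance `(v, t)`. -/
def EndsAtApp (v : V) (t : ℕ) (L : List (TArc V)) : Prop :=
  ∃ e ∈ L.getLast?, e.2.1 = v ∧ e.2.2 = t

/-- `L` is an `s`-`z`-walk of `G`. -/
def IsWalkFromTo (G : TemporalGraph V) (s z : V) (L : List (TArc V)) : Prop :=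
  G.IsTWalk L ∧ StartsAt s L ∧ EndsAt z L

/-- `L` is an `s`-`(v,t)`-walk of `G`. -/
def IsWalkFromToApp (G : TemporalGraph V) (s v : V) (t : ℕ) (L : List (TArc V)) : Prop :=
  G.IsTWalk L ∧ StartsAt s L ∧ EndsAtApp v t L

/-- The list of vertices visited by a walk (its starting point followed by the
endpoints of all its transitions). -/
def walkVerts (L : List (TArc V)) : List V :=
  (L.head?.map Prod.fst).toList ++ L.map fun e => e.2.1

/-- A temporal path is a temporal walk that visits each vertex at most once. -/
def IsTPath (G : TemporalGraph V) (L : List (TArc V)) : Prop :=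
  G.IsTWalk L ∧ (walkVerts L).Nodup

/-- The walk `L` goes through vertex `v`. -/
def VisitsVertex (v : V) (L : List (TArc V)) : Prop := v ∈ walkVerts L

/-- The walk `L` contains a transition into the vertex appearance `(v, t)`. -/
def ContainsApp (v : V) (t : ℕ) (L : List (TArc V)) : Prop :=
  ∃ e ∈ L, e.2.1 = v ∧ e.2.2 = t

/-- The walk `L`, regarded as a walk starting at source `s`, goes through the vertex
appearance `(v, t)`; by convention the source is visited at the appearance `(s, 0)` only. -/
def VisitsApp (s v : V) (t : ℕ) (L : List (TArc V)) : Prop :=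
  (v = s ∧ t = 0) ∨ (v ≠ s ∧ ContainsApp v t L)

/-- A cost function maps temporal walks (arc sequences) to `ℝ ∪ {∞}`. -/
abbrev CostFn (V : Type*) := List (TArc V) → WithTop ℝ

/-- `c*_s(v, t)`: the minimum value of `c` over all `s`-`(v,t)`-walks; it is `∞` if the
minimum is not defined (not attained) or if there is no such walk. -/
noncomputable def cStar (G : TemporalGraph V) (c : CostFn V) (s v : V) (t : ℕ) : WithTop ℝ :=
  if h : ∃ L, G.IsWalkFromToApp s v t L ∧ ∀ L', G.IsWalkFromToApp s v t L' → c L ≤ c L' then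
    c h.choose
  else ⊤

/-- `c*_s(v) = min_{t ∈ [T]} c*_s(v, t)`. -/
noncomputable def cStarV (G : TemporalGraph V) (c : CostFn V) (s v : V) : WithTop ℝ :=
  (Finset.Icc 1 G.lifetime).inf fun t => G.cStar c s v t

/-- `L` is a `c`-optimal `s`-`(v,t)`-walk: `c L = c*_s(v, t) < ∞`. -/
def IsOptWalkToApp (G : TemporalGraph V) (c : CostFn V) (s v : V) (t : ℕ)
    (L : List (TArc V)) : Prop :=
  G.IsWalkFromToApp s v t L ∧ c L = G.cStar c s v t ∧ c L ≠ ⊤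

/-- `L` is a `c`-optimal `s`-`v`-walk: `c L = c*_s(v) < ∞`. -/
def IsOptWalkTo (G : TemporalGraph V) (c : CostFn V) (s v : V) (L : List (TArc V)) : Prop :=
  G.IsWalkFromTo s v L ∧ c L = G.cStarV c s v ∧ c L ≠ ⊤

/-- The induced set `𝒲^(c)` of optimal temporal walks of `c`. -/
def OptWalks (G : TemporalGraph V) (c : CostFn V) : Set (List (TArc V)) :=
  {L | ∃ s z, G.IsOptWalkTo c s z L}

/-- `c` is prefix-optimal: every prefix of an optimal temporal walk from `s`, ending at a
vertex appearance `(v, t)` of the walk, has cost `c*_s(v, t)`. -/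
def PrefixOptimal (G : TemporalGraph V) (c : CostFn V) : Prop :=
  ∀ L ∈ G.OptWalks c, ∀ s, StartsAt s L →
    ∀ (i : ℕ) (e : TArc V), L[i]? = some e →
      c (L.take (i + 1)) = G.cStar c s e.2.1 e.2.2

/-- `c` is prefix-exchangeable: if an optimal temporal walk from `s` goes through a vertex
appearance `(v, t)`, then replacing its prefix up to `(v, t)` by any `s`-`(v,t)`-walk of
cost `c*_s(v, t)` again yields an optimal temporal walk. -/
def PrefixExchangeable (G : TemporalGraph V) (c : CostFn V) : Prop :=
  ∀ L ∈ G.OptWalks c, ∀ s, StartsAt s L →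
    ∀ (i : ℕ) (e : TArc V), L[i]? = some e →
      ∀ L', G.IsWalkFromToApp s e.2.1 e.2.2 L' → c L' = G.cStar c s e.2.1 e.2.2 →
        L' ++ L.drop (i + 1) ∈ G.OptWalks c

/-- `c` is prefix-compatible if it is both prefix-optimal and prefix-exchangeable. -/
def PrefixCompatible (G : TemporalGraph V) (c : CostFn V) : Prop :=
  G.PrefixOptimal c ∧ G.PrefixExchangeable c

/-- `c` is finite if `𝒲^(c)` has finite cardinality. -/
def FiniteCost (G : TemporalGraph V) (c : CostFn V) : Prop := (G.OptWalks c).Finite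

/-- The direct predecessor relation of source `s` with respect to the walk set `Wset`:
`IsDirPred Wset s p q` holds iff `p ∈ Pre_s(q)`, i.e. iff some walk in `Wset` starting
at `s` visits the vertex appearance `p` directly before the vertex appearance `q`, or
`p = (s, 0)` and some walk in `Wset` starting at `s` begins with a transition into `q`.
This relation is exactly the arc relation of the predecessor graph `G̃_s`. -/
def IsDirPred (Wset : Set (List (TArc V))) (s : V) (p q : V × ℕ) : Prop :=
  ∃ L ∈ Wset, StartsAt s L ∧
    ((∃ (i : ℕ) (e f : TArc V), L[i]? = some e ∧ L[i + 1]? = some f ∧ e.2 = p ∧ f.2 = q) ∨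
      (p = (s, 0) ∧ ∃ f ∈ L.head?, f.2 = q))

/-- A directed path from `p` to `q` in the static digraph given by the arc relation `R`. -/
def IsRelPath {α : Type*} (R : α → α → Prop) (p q : α) (P : List α) : Prop :=
  P.Chain' R ∧ P.head? = some p ∧ P.getLast? = some q ∧ P.Nodup

/-- `σ_{sz}`: the number of `s`-`z`-walks in `𝒲`. -/
noncomputable def sigma (G : TemporalGraph V) (𝒲 : Set (List (TArc V))) (s z : V) : ℕ :=
  {L ∈ 𝒲 | G.IsWalkFromTo s z L}.ncard

/-- `σ_{sz}(v)`: the number of `s`-`z`-walks in `𝒲` that go through the vertex `v`. -/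
noncomputable def sigmaV (G : TemporalGraph V) (𝒲 : Set (List (TArc V))) (s z v : V) : ℕ :=
  {L ∈ 𝒲 | G.IsWalkFromTo s z L ∧ VisitsVertex v L}.ncard

/-- `σ_{sz}(v, t)`: the number of `s`-`z`-walks in `𝒲` that go through the vertex
appearance `(v, t)`. -/
noncomputable def sigmaApp (G : TemporalGraph V) (𝒲 : Set (List (TArc V))) (s z v : V)
    (t : ℕ) : ℕ :=
  {L ∈ 𝒲 | G.IsWalkFromTo s z L ∧ VisitsApp s v t L}.ncard

/-- `σ_{s(v,t)}`: the number of `c`-optimal `s`-`(v,t)`-walks. -/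
noncomputable def sigmaOptApp (G : TemporalGraph V) (c : CostFn V) (s v : V) (t : ℕ) : ℕ :=
  {L | G.IsOptWalkToApp c s v t L}.ncard

/-- The pair dependency `δ_{𝒲,sz}(v)`. -/
noncomputable def pairDep (G : TemporalGraph V) (𝒲 : Set (List (TArc V))) (s z v : V) : ℝ :=
  if 0 < G.sigma 𝒲 s z then (G.sigmaV 𝒲 s z v : ℝ) / (G.sigma 𝒲 s z : ℝ) else 0

/-- The temporal pair dependency `δ_{𝒲,sz}(v, t)`. -/
noncomputable def pairDepApp (G : TemporalGraph V) (𝒲 : Set (List (TArc V))) (s z v : V)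
    (t : ℕ) : ℝ :=
  if 0 < G.sigma 𝒲 s z then (G.sigmaApp 𝒲 s z v t : ℝ) / (G.sigma 𝒲 s z : ℝ) else 0

/-- The cumulative dependency `δ_{𝒲,s}(v)`. -/
noncomputable def cumDep [Fintype V] (G : TemporalGraph V) (𝒲 : Set (List (TArc V)))
    (s v : V) : ℝ :=
  ∑ z : V, G.pairDep 𝒲 s z v

/-- The temporal cumulative dependency `δ_{𝒲,s}(v, t)`. -/
noncomputable def cumDepApp [Fintype V] (G : TemporalGraph V) (𝒲 : Set (List (TArc V)))
    (s v : V) (t : ℕ) : ℝ :=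
  ∑ z : V, G.pairDepApp 𝒲 s z v t

/-- The temporal betweenness centrality `B_𝒲(v) = Σ_{s ≠ v ≠ z} δ_{𝒲,sz}(v)`. -/
noncomputable def btw [Fintype V] (G : TemporalGraph V) (𝒲 : Set (List (TArc V)))
    (v : V) : ℝ :=
  ∑ s : V, ∑ z : V, if s ≠ v ∧ z ≠ v then G.pairDep 𝒲 s z v else 0

/-- The total temporal betweenness centrality `B*_𝒲(v) = Σ_{s, z ∈ V} δ_{𝒲,sz}(v)`. -/
noncomputable def totBtw [Fintype V] (G : TemporalGraph V) (𝒲 : Set (List (TArc V)))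
    (v : V) : ℝ :=
  ∑ s : V, ∑ z : V, G.pairDep 𝒲 s z v

/-- The edge dependency `δ_{𝒲,sz}(v, t, (v, w, t'))`: the fraction of `s`-`z`-walks in `𝒲`
that go through the vertex appearance `(v, t)` and use the time arc `(v, w, t')`. -/
noncomputable def edgeDep (G : TemporalGraph V) (𝒲 : Set (List (TArc V))) (s z v : V)
    (t : ℕ) (w : V) (t' : ℕ) : ℝ :=
  if 0 < G.sigma 𝒲 s z then
    ({L ∈ 𝒲 | G.IsWalkFromTo s z L ∧ VisitsApp s v t L ∧ (v, w, t') ∈ L}.ncard : ℝ) /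
      (G.sigma 𝒲 s z : ℝ)
  else 0


private def repList {α : Type*} (B : List α) : ℕ → List α
  | 0 => []
  | k + 1 => repList B k ++ B

private lemma repList_length {α : Type*} (B : List α) (k : ℕ) :
    (repList B k).length = k * B.length := by
  induction k with
  | zero => simp [repList]
  | succ k ih => simp [repList, ih, Nat.succ_mul]

private lemma repList_add {α : Type*} (B : List α) (a b : ℕ) :
    repList B (a + b) = repList B a ++ repList B b := by
  induction b with
  | zero => simp [repList]
  | succ b ih =>
    rw [show a + (b + 1) = (a + b) + 1 from rfl]
    simp [repList, ih, List.append_assoc]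

private lemma head?_of_prefix {α : Type*} {X Y : List α} (h : X <+: Y) (hne : X ≠ []) :
    Y.head? = X.head? := by
  obtain ⟨r, rfl⟩ := h
  exact List.head?_append_of_ne_nil _ hne

private lemma isTWalk_of_prefix (G : TemporalGraph V) {X Y : List (TArc V)}
    (h : G.IsTWalk Y) (hp : X <+: Y) (hne : X ≠ []) : G.IsTWalk X :=
  ⟨hne, fun e he => h.2.1 e (hp.subset he), h.2.2.prefix hp⟩

/-- Let `c` be a prefix-compatible and finite cost function on a temporal
graph `𝒢`. Then no `c`-optimal temporal walk visits the same vertex appearance `(v, t)`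
twice (i.e. the list of vertex appearances of any walk in `𝒲^(c)` has no duplicates). -/
theorem no_vertex_appearance_twice {V : Type*} [Fintype V] (G : TemporalGraph V)
    (c : CostFn V) (hpc : G.PrefixCompatible c) (hfin : G.FiniteCost c) :
    ∀ L ∈ G.OptWalks c, (L.map Prod.snd).Nodup := by
  rintro L ⟨s, z, hLopt⟩
  by_contra hdup
  have key : ∀ (i j : ℕ) (hij : i < j) (hj : j < L.length),
      (L[i]'(Nat.lt_trans hij hj)).2 = (L[j]'hj).2 → False := by
    intro i j hij hj hsnd
    have hilt : i < L.length := Nat.lt_trans hij hj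
    set A := L.take (i + 1) with hA
    set B := (L.drop (i + 1)).take (j - i) with hB
    set C := L.drop (j + 1) with hC
    have hAlen : A.length = i + 1 := by
      rw [hA, List.length_take]; omega
    have hBlen : B.length = j - i := by
      rw [hB, List.length_take, List.length_drop]; omega
    have hAne : A ≠ [] := by
      intro h; have := congrArg List.length h; rw [hAlen] at this; simp at this
    have hBne : B ≠ [] := by
      intro h; have := congrArg List.length h; rw [hBlen] at this; simp at this; omega
    have hABC : A ++ (B ++ C) = L := by
      rw [← List.append_assoc, hA, hB, ← List.take_add, hC,
        show i + 1 + (j - i) = j + 1 by omega, List.take_append_drop]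
    have hAlast : A.getLast? = some (L[i]'hilt) := by
      rw [List.getLast?_eq_getElem?, hAlen, Nat.add_sub_cancel, hA, List.getElem?_take,
        if_pos (Nat.lt_succ_self i), List.getElem?_eq_getElem hilt]
    have hBlast : B.getLast? = some (L[j]'hj) := by
      rw [List.getLast?_eq_getElem?, hBlen, hB, List.getElem?_take,
        if_pos (by omega), List.getElem?_drop,
        show i + 1 + (j - i - 1) = j by omega, List.getElem?_eq_getElem hj]
    -- last elements of the partial walks `A ++ B^k`
    have hDlast : ∀ k : ℕ, ∃ e, (A ++ repList B k).getLast? = some e ∧ e.2 = (L[j]'hj).2 := by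
      intro k
      cases k with
      | zero =>
        refine ⟨L[i]'hilt, ?_, hsnd⟩
        rw [show repList B 0 = ([] : List (TArc V)) from rfl, List.append_nil]
        exact hAlast
      | succ k =>
        refine ⟨L[j]'hj, ?_, rfl⟩
        rw [show repList B (k + 1) = repList B k ++ B from rfl,
          List.getLast?_append_of_ne_nil _ (by simp [hBne]),
          List.getLast?_append_of_ne_nil _ hBne]
        exact hBlast
    have hDpre : ∀ k d : ℕ, (A ++ repList B k) <+: (A ++ (repList B (k + d) ++ C)) := by
      intro k d
      exact ⟨repList B d ++ C, by rw [repList_add]; simp [List.append_assoc]⟩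
    have hDne : ∀ k : ℕ, (A ++ repList B k) ≠ [] := by
      intro k h; exact hAne (List.append_eq_nil_iff.mp h).1
    have hDpos : ∀ k : ℕ, 0 < (A ++ repList B k).length := fun k => List.length_pos_iff.mpr (hDne k)
    have hPget : ∀ k d : ℕ, ∃ e,
        (A ++ (repList B (k + d) ++ C))[(A ++ repList B k).length - 1]? = some e ∧
          e.2 = (L[j]'hj).2 := by
      intro k d
      obtain ⟨e, hel, he2⟩ := hDlast k
      refine ⟨e, ?_, he2⟩
      obtain ⟨r, hr⟩ := hDpre k d
      rw [← hr, List.getElem?_append_left (by have := hDpos k; omega),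
        ← List.getLast?_eq_getElem?]
      exact hel
    have hApreL : A <+: L := ⟨L.drop (i + 1), by rw [hA]; exact List.take_append_drop _ _⟩
    have hheadL : L.head? = A.head? := head?_of_prefix hApreL hAne
    have hstartPre : ∀ X : List (TArc V), A <+: X → StartsAt s X := by
      intro X hX
      obtain ⟨e0, he0, hs0⟩ := hLopt.1.2.1
      refine ⟨e0, ?_, hs0⟩
      rw [head?_of_prefix hX hAne, ← hheadL]
      exact he0
    -- the pumped walks are all optimal
    have hmain : ∀ k : ℕ, A ++ (repList B (k + 1) ++ C) ∈ G.OptWalks c := by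
      intro k
      induction k with
      | zero =>
        have h1 : A ++ (repList B 1 ++ C) = L := by
          rw [show repList B 1 = ([] : List (TArc V)) ++ B from rfl, List.nil_append]
          exact hABC
        rw [h1]; exact ⟨s, z, hLopt⟩
      | succ k ih =>
        obtain ⟨s', z', hopt'⟩ := ih
        have hPK : A ++ (repList B (k + 1) ++ C) ∈ G.OptWalks c := ⟨s', z', hopt'⟩
        have hTW : G.IsTWalk (A ++ (repList B (k + 1) ++ C)) := hopt'.1.1
        have hstart : StartsAt s (A ++ (repList B (k + 1) ++ C)) :=
          hstartPre _ ⟨repList B (k + 1) ++ C, rfl⟩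
        obtain ⟨e, hpe, he2⟩ := hPget k 1
        obtain ⟨f, hqf, hf2⟩ := hPget (k + 1) 0
        simp only [Nat.add_zero] at hqf
        have htake : (A ++ (repList B (k + 1) ++ C)).take
            ((A ++ repList B (k + 1)).length - 1 + 1) = A ++ repList B (k + 1) := by
          rw [Nat.sub_add_cancel (hDpos (k + 1)), ← List.append_assoc]
          exact List.take_left' rfl
        have hcost : c (A ++ repList B (k + 1)) = G.cStar c s f.2.1 f.2.2 := by
          have h0 := hpc.1 _ hPK s hstart ((A ++ repList B (k + 1)).length - 1) f hqf
          rwa [htake] at h0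
        have hwalk : G.IsWalkFromToApp s f.2.1 f.2.2 (A ++ repList B (k + 1)) := by
          refine ⟨isTWalk_of_prefix G hTW ⟨C, List.append_assoc _ _ _⟩ (hDne (k + 1)),
            hstartPre _ ⟨repList B (k + 1), rfl⟩, ?_⟩
          obtain ⟨g, hgl, hg2⟩ := hDlast (k + 1)
          have hgf : g.2 = f.2 := hg2.trans hf2.symm
          exact ⟨g, by simp [hgl], congrArg Prod.fst hgf, congrArg Prod.snd hgf⟩
        have hfe : f.2 = e.2 := hf2.trans he2.symm
        rw [show f.2.1 = e.2.1 from congrArg Prod.fst hfe,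
          show f.2.2 = e.2.2 from congrArg Prod.snd hfe] at hwalk hcost
        have hexch := hpc.2 _ hPK s hstart ((A ++ repList B k).length - 1) e hpe
          (A ++ repList B (k + 1)) hwalk hcost
        have hdrop : (A ++ (repList B (k + 1) ++ C)).drop
            ((A ++ repList B k).length - 1 + 1) = B ++ C := by
          have h1 : A ++ (repList B (k + 1) ++ C) = (A ++ repList B k) ++ (B ++ C) := by
            rw [show repList B (k + 1) = repList B k ++ B from rfl]
            simp [List.append_assoc]
          rw [h1, Nat.sub_add_cancel (hDpos k)]
          exact List.drop_left' rfl
        have hfinal : (A ++ repList B (k + 1)) ++ (B ++ C)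
            = A ++ (repList B (k + 1 + 1) ++ C) := by
          rw [show repList B (k + 1 + 1) = repList B (k + 1) ++ B from rfl]
          simp [List.append_assoc]
        rwa [hdrop, hfinal] at hexch
    -- infinitely many optimal walks: contradiction with finiteness
    have hBpos : 0 < B.length := by rw [hBlen]; omega
    have hinj : Function.Injective fun k : ℕ => A ++ (repList B (k + 1) ++ C) := by
      intro a b hab
      have hlen := congrArg List.length hab
      simp only [List.length_append, repList_length] at hlen
      have h2 : (a + 1) * B.length + C.length = (b + 1) * B.length + C.length :=
        Nat.add_left_cancel hlen
      have h3 : (a + 1) * B.length = (b + 1) * B.length := Nat.add_right_cancel h2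
      have h4 : a + 1 = b + 1 := Nat.eq_of_mul_eq_mul_right hBpos h3
      omega
    exact (Set.infinite_of_injective_forall_mem hinj hmain) hfin
  rw [List.nodup_iff_injective_get, Function.not_injective_iff] at hdup
  obtain ⟨⟨a, ha⟩, ⟨b, hb⟩, heq, hne⟩ := hdup
  simp only [List.get_eq_getElem, List.getElem_map] at heq
  rw [List.length_map] at ha hb
  have hab : a ≠ b := by rintro rfl; exact hne rfl
  rcases hab.lt_or_gt with h | h
  · exact key a b h hb heq
  · exact key b a h ha heq.symm

end TemporalGraph
end

section
/- Let c be a prefix-compatible cost function on a temporal graph 𝒢. Then c is finite if and only if for every source vertex s the predecessor graph G̃_s(c) of s with respect to the induced set of optimal temporal walks 𝒲^(c) is acyclic. -/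
open scoped Classical

/-!
A cycle through `p` in `G̃_s` can be traversed forever: prefix-exchangeability lets us append the
arc into the next vertex appearance to a minimum-cost walk to the current one, and
prefix-optimality keeps the extended walk of minimum cost and a prefix of an optimal walk, so
`𝒲^(c)` contains walks of unbounded length. Conversely, consecutive arcs of an optimal walk from
`s` give arcs of `G̃_s`, so if `G̃_s` is acyclic no optimal walk repeats a vertex appearance; an
optimal walk is then a duplicate-free list of arcs of the finite graph, and there are only
finitely many of those.
-/

theorem List.Nodup.of_isChain_of_acyclic {α : Type*} {R : α → α → Prop} {l : List α}
    (hl : l.IsChain R) (hR : ∀ a, ¬ Relation.TransGen R a a) : l.Nodup :=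
  (hl.imp fun _ _ => Relation.TransGen.single).pairwise.imp
    fun {a b} (hab : Relation.TransGen R a b) (heq : a = b) => hR a (heq ▸ hab)

theorem Set.Finite.setOf_nodup_subset {α : Type*} {S : Set α} (hS : S.Finite) :
    {l : List α | l.Nodup ∧ ∀ x ∈ l, x ∈ S}.Finite := by
  have := hS.fintype
  refine ((List.finite_length_le S (Fintype.card S)).image (List.map Subtype.val)).subset ?_
  rintro l ⟨hnd, hlS⟩
  have hmap := List.attachWith_map_subtype_val hlS
  refine ⟨l.attachWith (· ∈ S) hlS, ?_, hmap⟩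
  have : (l.attachWith (· ∈ S) hlS).Nodup := .of_map Subtype.val (by rwa [hmap])
  simpa using this.length_le_card

namespace TemporalGraph

variable {V : Type*} {G : TemporalGraph V} {c : CostFn V} {s : V} {L W : List (TArc V)}

theorem arcs_finite [Finite V] (G : TemporalGraph V) : G.arcs.Finite :=
  (Set.finite_univ.prod (Set.finite_univ.prod (Set.finite_Icc 1 G.lifetime))).subset
    fun e he => ⟨trivial, trivial, (G.arcs_valid e he).2⟩

theorem IsTWalk.of_mem_optWalks (hL : L ∈ G.OptWalks c) : G.IsTWalk L := by
  obtain ⟨_, _, h⟩ := hL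
  exact h.1.1

theorem IsWalkFromToApp.one_le {v : V} {t : ℕ} (hW : G.IsWalkFromToApp s v t W) : 1 ≤ t := by
  obtain ⟨f, hf, -, rfl⟩ := hW.2.2
  exact (G.arcs_valid f (hW.1.2.1 f (List.mem_of_mem_getLast? hf))).2.1

theorem IsTWalk.take_succ (hL : G.IsTWalk L) {i : ℕ} (hi : i < L.length) :
    G.IsTWalk (L.take (i + 1)) :=
  ⟨by simp [List.take_eq_nil_iff, List.ne_nil_of_length_pos (by omega : 0 < L.length)],
    fun e he => hL.2.1 e (List.mem_of_mem_take he), hL.2.2.prefix (List.take_prefix _ _)⟩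

theorem isWalkFromToApp_take (hL : G.IsTWalk L) (hs : StartsAt s L) {i : ℕ} {e : TArc V}
    (he : L[i]? = some e) : G.IsWalkFromToApp s e.2.1 e.2.2 (L.take (i + 1)) := by
  have hi : i < L.length := (List.getElem?_eq_some_iff.mp he).1
  refine ⟨hL.take_succ hi, ?_, e, ?_, rfl, rfl⟩
  · obtain ⟨f, hf, hfs⟩ := hs
    exact ⟨f, by rwa [List.head?_take, if_neg (by omega)], hfs⟩
  · rw [List.getLast?_take, if_neg (by omega)]
    simp [he]

theorem isChain_map_snd_isDirPred {Wset : Set (List (TArc V))} (hL : L ∈ Wset)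
    (hs : StartsAt s L) : (L.map Prod.snd).IsChain (IsDirPred Wset s) := by
  refine List.isChain_iff_getElem.mpr fun i hi => ?_
  rw [List.length_map] at hi
  simp only [List.getElem_map]
  exact ⟨L, hL, hs, .inl ⟨i, _, _, List.getElem?_eq_getElem (by omega),
    List.getElem?_eq_getElem hi, rfl, rfl⟩⟩

theorem finite_optWalks_of_acyclic [Finite V]
    (h : ∀ s p, ¬ Relation.TransGen (IsDirPred (G.OptWalks c) s) p p) :
    (G.OptWalks c).Finite :=
  G.arcs_finite.setOf_nodup_subset.subset fun L hL => by
    obtain ⟨s, _, hopt⟩ := id hL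
    exact ⟨(List.Nodup.of_isChain_of_acyclic
      (isChain_map_snd_isDirPred hL hopt.1.2.1) (h s)).of_map _, hopt.1.1.2.1⟩

def IsMinWalkToApp (G : TemporalGraph V) (c : CostFn V) (s : V) (p : V × ℕ)
    (W : List (TArc V)) : Prop :=
  G.IsWalkFromToApp s p.1 p.2 W ∧ c W = G.cStar c s p.1 p.2

theorem isMinWalkToApp_take (hpo : G.PrefixOptimal c) (hL : L ∈ G.OptWalks c)
    (hs : StartsAt s L) {i : ℕ} {e : TArc V} (he : L[i]? = some e) :
    G.IsMinWalkToApp c s e.2 (L.take (i + 1)) :=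
  ⟨isWalkFromToApp_take (.of_mem_optWalks hL) hs he, hpo L hL s hs i e he⟩

theorem exists_isMinWalkToApp_of_isDirPred (hpo : G.PrefixOptimal c) {r p : V × ℕ}
    (h : IsDirPred (G.OptWalks c) s r p) : ∃ W, G.IsMinWalkToApp c s p W := by
  obtain ⟨L, hL, hs, ⟨i, -, f, -, hf, -, rfl⟩ | ⟨-, f, hf, rfl⟩⟩ := h
  · exact ⟨_, isMinWalkToApp_take hpo hL hs hf⟩
  · exact ⟨_, isMinWalkToApp_take hpo hL hs (i := 0) (by rwa [← List.head?_eq_getElem?])⟩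

theorem IsMinWalkToApp.exists_append_of_isDirPred (hpc : G.PrefixCompatible c)
    {p q : V × ℕ} (hW : G.IsMinWalkToApp c s p W) (hpq : IsDirPred (G.OptWalks c) s p q) :
    ∃ f, G.IsMinWalkToApp c s q (W ++ [f]) ∧ ∃ E ∈ G.OptWalks c, W ++ [f] <+: E := by
  obtain ⟨L, hL, hs, ⟨i, e, f, he, hf, rfl, rfl⟩ | ⟨rfl, -⟩⟩ := hpq
  · obtain ⟨hi, rfl⟩ := List.getElem?_eq_some_iff.mp hf
    have hE := hpc.2 L hL s hs i e he W hW.1 hW.2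
    have hEq : W ++ L.drop (i + 1) = W ++ [L[i + 1]] ++ L.drop (i + 2) := by
      rw [List.drop_eq_getElem_cons hi]; simp
    rw [hEq] at hE
    have hEs : StartsAt s (W ++ [L[i + 1]] ++ L.drop (i + 2)) := by
      obtain ⟨g, hg, hgs⟩ := hW.1.2.1
      exact ⟨g, by rw [List.append_assoc, List.head?_append, Option.mem_def.mp hg]; rfl, hgs⟩
    have hmin := isMinWalkToApp_take hpc.1 hE hEs (i := W.length) (e := L[i + 1])
      (by simp [List.getElem?_append_right])
    rw [List.take_left' (by simp)] at hmin
    exact ⟨_, hmin, _, hE, List.prefix_append _ _⟩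
  · -- no walk ends at the appearance `(s, 0)`, since time labels are positive
    exact absurd hW.1.one_le (by simp)

theorem IsMinWalkToApp.exists_longer_of_transGen (hpc : G.PrefixCompatible c) {p q : V × ℕ}
    (hW : G.IsMinWalkToApp c s p W) (h : Relation.TransGen (IsDirPred (G.OptWalks c) s) p q) :
    ∃ W', G.IsMinWalkToApp c s q W' ∧ W.length < W'.length ∧ ∃ E ∈ G.OptWalks c, W' <+: E := by
  induction h with
  | single hpq =>
    obtain ⟨f, hf, hE⟩ := hW.exists_append_of_isDirPred hpc hpq
    exact ⟨_, hf, by simp, hE⟩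
  | tail _ hqr ih =>
    obtain ⟨W', hW', hlt, -⟩ := ih
    obtain ⟨f, hf, hE⟩ := hW'.exists_append_of_isDirPred hpc hqr
    exact ⟨_, hf, by simp; omega, hE⟩

theorem not_finite_optWalks_of_transGen_self (hpc : G.PrefixCompatible c) {p : V × ℕ}
    (h : Relation.TransGen (IsDirPred (G.OptWalks c) s) p p) : ¬ (G.OptWalks c).Finite := by
  intro hfin
  obtain ⟨m, hm⟩ := (hfin.image List.length).bddAbove
  obtain ⟨r, -, hrp⟩ := Relation.TransGen.tail'_iff.mp h
  have hlong : ∀ n, ∃ W, G.IsMinWalkToApp c s p W ∧ n ≤ W.length := by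
    intro n
    induction n with
    | zero =>
      obtain ⟨W, hW⟩ := exists_isMinWalkToApp_of_isDirPred hpc.1 hrp
      exact ⟨W, hW, Nat.zero_le _⟩
    | succ n ih =>
      obtain ⟨W, hW, hn⟩ := ih
      obtain ⟨W', hW', hlt, -⟩ := hW.exists_longer_of_transGen hpc h
      exact ⟨W', hW', by omega⟩
  obtain ⟨W, hW, hWm⟩ := hlong (m + 1)
  obtain ⟨W', -, hlt, E, hE, hpre⟩ := hW.exists_longer_of_transGen hpc h
  have hEm : E.length ≤ m := hm ⟨E, hE, rfl⟩
  have hW'E : W'.length ≤ E.length := hpre.length_le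
  omega

/-- Let `c` be a prefix-compatible cost function on a temporal graph `𝒢`.
Then `c` is finite if and only if for every source vertex `s` the predecessor graph
`G̃_s(c)` of `s` with respect to `𝒲^(c)` is acyclic (its arc relation has no directed
cycle, i.e. the transitive closure of the arc relation is irreflexive). -/
theorem finite_iff_predecessor_graph_acyclic {V : Type*} [Fintype V] (G : TemporalGraph V)
    (c : CostFn V) (hpc : G.PrefixCompatible c) :
    G.FiniteCost c ↔
      ∀ (s : V) (p : V × ℕ), ¬ Relation.TransGen (IsDirPred (G.OptWalks c) s) p p :=
  ⟨fun hfin _ _ hcyc => not_finite_optWalks_of_transGen_self hpc hcyc hfin,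
    finite_optWalks_of_acyclic⟩

end TemporalGraph
end

section
/- For every Δ ∈ ℕ, the cost function for shortest Δ-restless temporal walks, which maps a temporal walk W to its number of transitions if the time labels of any two consecutive transitions of W differ by at most Δ, and to ∞ otherwise, is prefix-compatible (that is, both prefix-optimal and prefix-exchangeable). -/
open scoped Classical

namespace TemporalGraph

variable {V : Type*}

/-- The cost function for shortest `Δ`-restless temporal walks: it maps a temporal walk
`W` to its number of transitions if the time labels of any two consecutive transitions of
`W` differ by at most `Δ`, and to `∞` otherwise. -/
noncomputable def restlessCost (Δ : ℕ) : CostFn V := fun L =>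
  if L.Chain' (fun e f => f.2.2 ≤ e.2.2 + Δ) then ((L.length : ℝ) : WithTop ℝ) else ⊤

/-!
The restless cost of a walk is its length as long as the walk is `Δ`-restless. Both the
temporal-walk condition and the restlessness condition at the junction of two concatenated walks
only involve the vertex appearance `(v, t)` where they meet, so the prefix of a restless walk `W`
up to `(v, t)` may be replaced by any restless walk to `(v, t)`. If `W` is optimal, its prefix
therefore cannot be longer than a shortest walk to `(v, t)`, and splicing in a walk of optimal
cost gives a walk of the same length as `W`.
-/

theorem _root_.List.IsChain.append_of_getLast?_map_eq {α β : Type*} {R : α → α → Prop}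
    (key : α → β) (hR : ∀ a b c, key a = key b → R a c → R b c) {A B M : List α}
    (hAB : (A ++ B).IsChain R) (hM : M.IsChain R)
    (hkey : M.getLast?.map key = A.getLast?.map key) : (M ++ B).IsChain R := by
  obtain ⟨-, hB, hjoin⟩ := List.isChain_append.1 hAB
  refine hM.append hB fun x hx y hy => ?_
  have hA : A.getLast?.map key = some (key x) := by rw [← hkey, Option.mem_def.1 hx]; rfl
  obtain ⟨a, ha, hax⟩ := Option.map_eq_some_iff.1 hA
  exact hR a x y hax (hjoin a ha y hy)

theorem _root_.List.getLast?_map_append_eq {α β : Type*} (f : α → β) {A B M : List α}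
    (h : M.getLast?.map f = A.getLast?.map f) :
    (M ++ B).getLast?.map f = (A ++ B).getLast?.map f := by
  simp only [List.getLast?_append, Option.map_or, h]

section Walks

variable {G : TemporalGraph V} {s s' v z : V} {t i : ℕ} {e : TArc V} {A B L M : List (TArc V)}

theorem StartsAt.eq (h : StartsAt s L) (h' : StartsAt s' L) : s = s' := by
  obtain ⟨a, ha, rfl⟩ := h
  obtain ⟨b, hb, rfl⟩ := h'
  rw [Option.mem_def, ha, Option.some_inj] at hb
  rw [hb]

theorem endsAt_iff : EndsAt z L ↔ L.getLast?.map (·.2.1) = some z := by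
  simp [EndsAt]

theorem endsAtApp_iff : EndsAtApp v t L ↔ L.getLast?.map Prod.snd = some (v, t) := by
  simp [EndsAtApp, Prod.ext_iff]

theorem getLast?_take_succ (he : L[i]? = some e) : (L.take (i + 1)).getLast? = some e := by
  simp [List.getLast?_take, he]

theorem IsWalkFromTo.take_succ (hL : G.IsWalkFromTo s z L) (he : L[i]? = some e) :
    G.IsWalkFromToApp s e.2.1 e.2.2 (L.take (i + 1)) := by
  obtain ⟨⟨-, harcs, hchain⟩, ⟨a, ha, has⟩, -⟩ := hL
  have hne : L.take (i + 1) ≠ [] := by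
    simp [← List.getLast?_eq_none_iff, getLast?_take_succ he]
  refine ⟨⟨hne, fun f hf => harcs f (List.take_subset _ _ hf), hchain.take _⟩,
    ⟨a, by simpa [List.head?_take] using ha, has⟩, ⟨e, getLast?_take_succ he, rfl, rfl⟩⟩

theorem IsWalkFromTo.append_of_getLast?_map_eq (hAB : G.IsWalkFromTo s z (A ++ B))
    (hM : G.IsTWalk M) (hMs : StartsAt s' M)
    (hkey : M.getLast?.map Prod.snd = A.getLast?.map Prod.snd) :
    G.IsWalkFromTo s' z (M ++ B) := by
  obtain ⟨⟨-, hABarcs, hABchain⟩, -, hz⟩ := hAB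
  obtain ⟨hMne, hMarcs, hMchain⟩ := hM
  obtain ⟨a, ha, has⟩ := hMs
  have hkey₁ : M.getLast?.map (·.2.1) = A.getLast?.map (·.2.1) := by
    have h := congrArg (Option.map Prod.fst) hkey
    rwa [Option.map_map, Option.map_map] at h
  refine ⟨⟨by simp [hMne], ?_, ?_⟩, ⟨a, by rwa [List.head?_append_of_ne_nil _ hMne], has⟩, ?_⟩
  · intro f hf
    rcases List.mem_append.1 hf with hf | hf
    · exact hMarcs f hf
    · exact hABarcs f (List.mem_append_right _ hf)
  · refine hABchain.append_of_getLast?_map_eq Prod.snd ?_ hMchain hkey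
    rintro a b c hab hac
    rwa [← hab]
  · rw [endsAt_iff, List.getLast?_map_append_eq _ hkey₁, ← endsAt_iff]
    exact hz

end Walks

def IsRestless (Δ : ℕ) (L : List (TArc V)) : Prop :=
  L.IsChain fun e f => f.2.2 ≤ e.2.2 + Δ

section Restless

variable {Δ : ℕ} {A B L M : List (TArc V)}

theorem IsRestless.append_of_getLast?_map_eq (hAB : IsRestless Δ (A ++ B))
    (hM : IsRestless Δ M) (hkey : M.getLast?.map Prod.snd = A.getLast?.map Prod.snd) :
    IsRestless Δ (M ++ B) :=
  List.IsChain.append_of_getLast?_map_eq Prod.snd (fun a b c hab hac => by rwa [← hab]) hAB hM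
    hkey

theorem restlessCost_of_isRestless (h : IsRestless Δ L) :
    restlessCost Δ L = ((L.length : ℝ) : WithTop ℝ) :=
  if_pos h

theorem restlessCost_of_not_isRestless (h : ¬IsRestless Δ L) : restlessCost Δ L = ⊤ :=
  if_neg h

theorem restlessCost_ne_top_iff : restlessCost Δ L ≠ ⊤ ↔ IsRestless Δ L :=
  ⟨not_imp_comm.1 restlessCost_of_not_isRestless,
    fun h => by simp [restlessCost_of_isRestless h]⟩

theorem restlessCost_le_restlessCost_iff (hM : IsRestless Δ M) (hL : IsRestless Δ L) :
    restlessCost Δ M ≤ restlessCost Δ L ↔ M.length ≤ L.length := by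
  simp [restlessCost_of_isRestless hM, restlessCost_of_isRestless hL]

theorem restlessCost_eq_restlessCost_iff (hM : IsRestless Δ M) (hL : IsRestless Δ L) :
    restlessCost Δ M = restlessCost Δ L ↔ M.length = L.length := by
  simp [restlessCost_of_isRestless hM, restlessCost_of_isRestless hL]

-- Restless costs take values in `ℕ ∪ {∞}`, so they attain their minimum on any nonempty set.
theorem exists_restlessCost_isMin {P : List (TArc V) → Prop} (hP : ∃ L, P L) :
    ∃ M, P M ∧ ∀ L, P L → restlessCost Δ M ≤ restlessCost Δ L := by
  by_cases hr : ∃ L, P L ∧ IsRestless Δ L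
  · set S := {L | P L ∧ IsRestless Δ L}
    refine ⟨Function.argminOn List.length S hr, (Function.argminOn_mem _ S hr).1, fun L hL => ?_⟩
    by_cases hLr : IsRestless Δ L
    · exact (restlessCost_le_restlessCost_iff (Function.argminOn_mem _ S hr).2 hLr).2
        (Function.argminOn_le _ S ⟨hL, hLr⟩)
    · simp [restlessCost_of_not_isRestless hLr]
  · obtain ⟨M, hM⟩ := hP
    refine ⟨M, hM, fun L hL => ?_⟩
    simp [restlessCost_of_not_isRestless fun h => hr ⟨L, hL, h⟩]

end Restless

section CStar

variable {G : TemporalGraph V} {c : CostFn V} {s v : V} {t : ℕ} {L : List (TArc V)}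

theorem cStar_eq_of_isMin (hL : G.IsWalkFromToApp s v t L)
    (hmin : ∀ L', G.IsWalkFromToApp s v t L' → c L ≤ c L') : G.cStar c s v t = c L := by
  have h : ∃ M, G.IsWalkFromToApp s v t M ∧ ∀ L', G.IsWalkFromToApp s v t L' → c M ≤ c L' :=
    ⟨L, hL, hmin⟩
  rw [cStar, dif_pos h]
  exact le_antisymm (h.choose_spec.2 L hL) (hmin _ h.choose_spec.1)

theorem exists_isOptWalkTo_of_mem_optWalks (hL : L ∈ G.OptWalks c) (hs : StartsAt s L) :
    ∃ z, G.IsOptWalkTo c s z L := by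
  obtain ⟨s', z, hL⟩ := hL
  obtain rfl := hs.eq hL.1.2.1
  exact ⟨z, hL⟩

end CStar

section RestlessOptimal

variable {Δ : ℕ} {G : TemporalGraph V} {s v z : V} {t i : ℕ} {e : TArc V}
  {L M : List (TArc V)}

theorem cStar_restlessCost_le (hL : G.IsWalkFromToApp s v t L) :
    G.cStar (restlessCost Δ) s v t ≤ restlessCost Δ L := by
  obtain ⟨M, hM, hmin⟩ := exists_restlessCost_isMin (Δ := Δ) ⟨L, hL⟩
  rw [cStar_eq_of_isMin hM hmin]
  exact hmin L hL

theorem cStarV_restlessCost_le (hL : G.IsWalkFromTo s z L) :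
    G.cStarV (restlessCost Δ) s z ≤ restlessCost Δ L := by
  obtain ⟨a, ha, haz⟩ := hL.2.2
  obtain ⟨-, ht₁, htT⟩ := G.arcs_valid a (hL.1.2.1 a (List.mem_of_getLast? ha))
  calc G.cStarV (restlessCost Δ) s z ≤ G.cStar (restlessCost Δ) s z a.2.2 :=
        Finset.inf_le (Finset.mem_Icc.2 ⟨ht₁, htT⟩)
    _ ≤ restlessCost Δ L := cStar_restlessCost_le ⟨hL.1, hL.2.1, a, ha, haz, rfl⟩

theorem IsWalkFromTo.splice_isRestless (hL : G.IsWalkFromTo s z L) (hLr : IsRestless Δ L)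
    (he : L[i]? = some e) (hM : G.IsWalkFromToApp s e.2.1 e.2.2 M) (hMr : IsRestless Δ M) :
    G.IsWalkFromTo s z (M ++ L.drop (i + 1)) ∧ IsRestless Δ (M ++ L.drop (i + 1)) := by
  have hkey : M.getLast?.map Prod.snd = (L.take (i + 1)).getLast?.map Prod.snd := by
    rw [getLast?_take_succ he, endsAtApp_iff.1 hM.2.2]
    rfl
  rw [← List.take_append_drop (i + 1) L] at hL hLr
  exact ⟨hL.append_of_getLast?_map_eq hM.1 hM.2.1 hkey,
    hLr.append_of_getLast?_map_eq hMr hkey⟩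

theorem IsOptWalkTo.cStar_restlessCost_eq_take (hL : G.IsOptWalkTo (restlessCost Δ) s z L)
    (he : L[i]? = some e) :
    G.cStar (restlessCost Δ) s e.2.1 e.2.2 = restlessCost Δ (L.take (i + 1)) := by
  obtain ⟨hLw, hLc, hLtop⟩ := hL
  have hLr := restlessCost_ne_top_iff.1 hLtop
  refine cStar_eq_of_isMin (hLw.take_succ he) fun M hM => ?_
  by_cases hMr : IsRestless Δ M
  swap
  · simp [restlessCost_of_not_isRestless hMr]
  obtain ⟨hW, hWr⟩ := hLw.splice_isRestless hLr he hM hMr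
  have hLW : restlessCost Δ L ≤ restlessCost Δ (M ++ L.drop (i + 1)) :=
    hLc ▸ cStarV_restlessCost_le hW
  rw [restlessCost_le_restlessCost_iff hLr hWr, List.length_append] at hLW
  rw [restlessCost_le_restlessCost_iff (List.IsChain.take hLr _) hMr]
  have hlen := congrArg List.length (List.take_append_drop (i + 1) L)
  rw [List.length_append] at hlen
  omega

theorem IsOptWalkTo.splice_mem_optWalks (hL : G.IsOptWalkTo (restlessCost Δ) s z L)
    (he : L[i]? = some e) (hM : G.IsWalkFromToApp s e.2.1 e.2.2 M)
    (hMc : restlessCost Δ M = G.cStar (restlessCost Δ) s e.2.1 e.2.2) :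
    M ++ L.drop (i + 1) ∈ G.OptWalks (restlessCost Δ) := by
  rw [hL.cStar_restlessCost_eq_take he] at hMc
  obtain ⟨hLw, hLc, hLtop⟩ := hL
  have hLr := restlessCost_ne_top_iff.1 hLtop
  have hAr : IsRestless Δ (L.take (i + 1)) := List.IsChain.take hLr _
  have hMr : IsRestless Δ M := restlessCost_ne_top_iff.1 (hMc ▸ restlessCost_ne_top_iff.2 hAr)
  obtain ⟨hW, hWr⟩ := hLw.splice_isRestless hLr he hM hMr
  have hWL : restlessCost Δ (M ++ L.drop (i + 1)) = restlessCost Δ L := by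
    rw [restlessCost_eq_restlessCost_iff hMr hAr] at hMc
    rw [restlessCost_eq_restlessCost_iff hWr hLr, List.length_append, hMc,
      ← List.length_append, List.take_append_drop]
  exact ⟨s, z, hW, hWL.trans hLc, hWL ▸ hLtop⟩

end RestlessOptimal

theorem restlessCost_prefixCompatible_general {V : Type*} (G : TemporalGraph V)
    (Δ : ℕ) :
    G.PrefixCompatible (restlessCost Δ) := by
  refine ⟨fun L hL s hs i e he => ?_, fun L hL s hs i e he M hM hMc => ?_⟩
  · obtain ⟨z, hLz⟩ := exists_isOptWalkTo_of_mem_optWalks hL hs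
    exact (hLz.cStar_restlessCost_eq_take he).symm
  · obtain ⟨z, hLz⟩ := exists_isOptWalkTo_of_mem_optWalks hL hs
    exact hLz.splice_mem_optWalks he hM hMc

/-- For every `Δ ∈ ℕ`, the cost function for shortest `Δ`-restless
temporal walks is prefix-compatible (both prefix-optimal and prefix-exchangeable). -/
theorem restlessCost_prefixCompatible {V : Type*} [Fintype V] (G : TemporalGraph V)
    (Δ : ℕ) :
    G.PrefixCompatible (restlessCost Δ) :=
  restlessCost_prefixCompatible_general G Δ

end TemporalGraph
end

section
/- Strict prefix-foremost temporal paths are closed under the operations required for prefix-compatibility: (1) every prefix of a strict prefix-foremost temporal path is a strict prefix-foremost temporal path; and (2) if a strict prefix-foremost s-z-path P goes through a vertex appearance (v,t) and P' is any strict prefix-foremost s-path ending at the vertex appearance (v,t), then the concatenation of P' with the suffix of P starting at (v,t) is again a strict prefix-foremost s-z-path (in particular, the concatenation is a path and not merely a walk). -/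
open scoped Classical

namespace TemporalGraph

variable {V : Type*}

/-- A temporal walk is strict if its time labels are strictly increasing. -/
def StrictWalk (L : List (TArc V)) : Prop := L.Chain' fun e f => e.2.2 < f.2.2

/-- The arrival time of a temporal walk: the time label of its last transition. -/
def arrival (L : List (TArc V)) : ℕ :=
  match L.getLast? with
  | some e => e.2.2
  | none => 0

/-- `L` is a foremost temporal `s`-`z`-walk: the time label of its last transition is
minimum among all temporal `s`-`z`-walks. -/
def Foremost (G : TemporalGraph V) (s z : V) (L : List (TArc V)) : Prop :=
  G.IsWalkFromTo s z L ∧ ∀ L', G.IsWalkFromTo s z L' → arrival L ≤ arrival L'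

/-- `L` is a strict prefix-foremost temporal `s`-`z`-path: it is a temporal path, strict,
foremost, and every (nonempty) prefix of it is foremost. -/
def IsSPF (G : TemporalGraph V) (s z : V) (L : List (TArc V)) : Prop :=
  G.IsTPath L ∧ StrictWalk L ∧ G.Foremost s z L ∧
    ∀ (k : ℕ) (z' : V), 0 < k → EndsAt z' (L.take k) → G.Foremost s z' (L.take k)

/-! Write `P = A ++ D` with `A` ending at `(v, t)`. Whether a walk from `s` is foremost depends
only on its last arc, and every nonempty prefix of `P' ++ D` has the same last arc as a prefix
of `P'` or of `P`; hence `P' ++ D` is prefix-foremost. It is a path because a vertex entered in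
`D` cannot be reached from `s` by time `t` (`P` is strict and prefix-foremost), whereas every
vertex of `P'` is reached by time `t`. -/

theorem _root_.List.isChain_append_of_getLast?_imp {α : Type*} {R : α → α → Prop}
    {A A' D : List α} (h : (A ++ D).IsChain R) (h' : A'.IsChain R)
    (hlast : ∀ a' ∈ A'.getLast?, ∃ a ∈ A.getLast?, ∀ d, R a d → R a' d) :
    (A' ++ D).IsChain R := by
  rw [List.isChain_append] at h ⊢
  refine ⟨h', h.2.1, fun a' ha' d hd => ?_⟩
  obtain ⟨a, ha, hR⟩ := hlast a' ha'
  exact hR d (h.2.2 a ha d hd)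

theorem _root_.List.exists_prefix_getLast?_eq_some {α : Type*} {L : List α} {a : α}
    (h : a ∈ L) : ∃ W, W <+: L ∧ W.getLast? = some a := by
  obtain ⟨P, Q, rfl⟩ := List.append_of_mem h
  exact ⟨P ++ [a], ⟨Q, by simp⟩, by simp⟩

theorem _root_.List.IsPrefix.prefix_or_exists_eq_append {α : Type*} {W A D : List α}
    (h : W <+: A ++ D) : W <+: A ∨ ∃ T, W = A ++ T ∧ T <+: D := by
  rcases List.prefix_or_prefix_of_prefix h (List.prefix_append A D) with hWA | ⟨T, rfl⟩
  · exact Or.inl hWA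
  · exact Or.inr ⟨T, rfl, (List.prefix_append_right_inj A).1 h⟩

theorem ne_nil_of_startsAt {s : V} {L : List (TArc V)} (h : StartsAt s L) : L ≠ [] := by
  rintro rfl
  simp [StartsAt] at h

theorem ne_nil_of_endsAt {z : V} {L : List (TArc V)} (h : EndsAt z L) : L ≠ [] := by
  rintro rfl
  simp [EndsAt] at h

theorem EndsAtApp.endsAt {v : V} {t : ℕ} {L : List (TArc V)} (h : EndsAtApp v t L) :
    EndsAt v L :=
  let ⟨e, he, hv, _⟩ := h
  ⟨e, he, hv⟩

theorem arrival_eq_of_getLast?_eq {L L₀ : List (TArc V)} (h : L.getLast? = L₀.getLast?) :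
    arrival L = arrival L₀ := by
  simp only [arrival, h]

theorem arrival_eq_of_getLast?_eq_some {L : List (TArc V)} {e : TArc V}
    (h : L.getLast? = some e) : arrival L = e.2.2 := by
  simp only [arrival, h]

theorem StartsAt.append_right {s : V} {A : List (TArc V)} (h : StartsAt s A)
    (B : List (TArc V)) : StartsAt s (A ++ B) := by
  rwa [StartsAt, List.head?_append_of_ne_nil A (ne_nil_of_startsAt h)]

theorem StartsAt.of_prefix {s : V} {W L : List (TArc V)} (h : StartsAt s L) (hW : W <+: L)
    (hne : W ≠ []) : StartsAt s W := by
  obtain ⟨T, rfl⟩ := hW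
  rwa [StartsAt, ← List.head?_append_of_ne_nil W hne]

theorem mem_walkVerts_iff {s w : V} {L : List (TArc V)} (h : StartsAt s L) :
    w ∈ walkVerts L ↔ w = s ∨ ∃ e ∈ L, e.2.1 = w := by
  obtain ⟨e, he, rfl⟩ := h
  rw [Option.mem_def] at he
  simp [walkVerts, he]

theorem mem_walkVerts_of_startsAt {s : V} {L : List (TArc V)} (h : StartsAt s L) :
    s ∈ walkVerts L :=
  (mem_walkVerts_iff h).2 (Or.inl rfl)

theorem walkVerts_append {A : List (TArc V)} (hA : A ≠ []) (B : List (TArc V)) :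
    walkVerts (A ++ B) = walkVerts A ++ B.map fun e => e.2.1 := by
  obtain ⟨a, l, rfl⟩ := List.exists_cons_of_ne_nil hA
  simp [walkVerts]

theorem StrictWalk.of_prefix {W L : List (TArc V)} (h : StrictWalk L) (hW : W <+: L) :
    StrictWalk W :=
  List.IsChain.prefix h hW

theorem StrictWalk.lt_of_mem_append {A D : List (TArc V)} (h : StrictWalk (A ++ D))
    {a d : TArc V} (ha : a ∈ A) (hd : d ∈ D) : a.2.2 < d.2.2 :=
  (List.pairwise_append.1 (List.isChain_iff_pairwise.1 h)).2.2 a ha d hd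

namespace IsTWalk

variable {G : TemporalGraph V}

theorem of_prefix {W L : List (TArc V)} (h : G.IsTWalk L) (hW : W <+: L) (hne : W ≠ []) :
    G.IsTWalk W :=
  ⟨hne, fun e he => h.2.1 e (hW.subset he), h.2.2.prefix hW⟩

theorem isWalkFromTo_of_prefix {s z : V} {W L : List (TArc V)} (h : G.IsTWalk L)
    (hs : StartsAt s L) (hW : W <+: L) (hz : EndsAt z W) : G.IsWalkFromTo s z W :=
  ⟨h.of_prefix hW (ne_nil_of_endsAt hz), hs.of_prefix hW (ne_nil_of_endsAt hz), hz⟩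

theorem label_le_of_getLast? {L : List (TArc V)} (h : G.IsTWalk L) {e g : TArc V}
    (he : e ∈ L) (hg : L.getLast? = some g) : e.2.2 ≤ g.2.2 := by
  obtain ⟨P, rfl⟩ := List.getLast?_eq_some_iff.1 hg
  have hle : (P ++ [g]).Pairwise fun e f : TArc V => e.2.2 ≤ f.2.2 :=
    List.isChain_iff_pairwise.1 (h.2.2.imp fun _ _ hef => hef.2)
  rcases List.mem_append.1 he with heP | heg
  · exact (List.pairwise_append.1 hle).2.2 e heP g (List.mem_singleton_self g)
  · rw [List.mem_singleton.1 heg]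

theorem exists_isWalkFromTo_arrival_le {s v : V} {t : ℕ} {L : List (TArc V)}
    (h : G.IsTWalk L) (hs : StartsAt s L) (ht : EndsAtApp v t L) {e : TArc V} (he : e ∈ L) :
    ∃ W, G.IsWalkFromTo s e.2.1 W ∧ arrival W ≤ t := by
  obtain ⟨W, hW, hWe⟩ := List.exists_prefix_getLast?_eq_some he
  obtain ⟨g, hg, -, rfl⟩ := ht
  refine ⟨W, h.isWalkFromTo_of_prefix hs hW ⟨e, hWe, rfl⟩, ?_⟩
  rw [arrival_eq_of_getLast?_eq_some hWe]
  exact h.label_le_of_getLast? he hg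

end IsTWalk

theorem Foremost.of_getLast?_eq {G : TemporalGraph V} {s z : V} {W W₀ : List (TArc V)}
    (h : G.Foremost s z W₀) (hW : G.IsTWalk W) (hs : StartsAt s W)
    (hlast : W.getLast? = W₀.getLast?) : G.Foremost s z W := by
  refine ⟨⟨hW, hs, ?_⟩, fun W' hW' => ?_⟩
  · obtain ⟨e, he, hez⟩ := h.1.2.2
    exact ⟨e, hlast ▸ he, hez⟩
  · rw [arrival_eq_of_getLast?_eq hlast]
    exact h.2 W' hW'

theorem EndsAt.append_exchange {z v : V} {A A' D : List (TArc V)} (h : EndsAt z (A ++ D))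
    (hA : EndsAt v A) (hA' : EndsAt v A') : EndsAt z (A' ++ D) := by
  cases hD : D.getLast? with
  | some d =>
    obtain ⟨e, he, hez⟩ := h
    rw [List.getLast?_append, hD] at he
    exact ⟨e, by rwa [List.getLast?_append, hD], hez⟩
  | none =>
    obtain ⟨e, he, rfl⟩ := h
    obtain ⟨a, ha, rfl⟩ := hA
    obtain ⟨a', ha', ha'a⟩ := hA'
    rw [List.getLast?_append, hD, Option.none_or] at he
    exact ⟨a', by rwa [List.getLast?_append, hD], by rw [ha'a, Option.mem_unique he ha]⟩

def PrefixForemost (G : TemporalGraph V) (s : V) (L : List (TArc V)) : Prop :=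
  ∀ W, W <+: L → ∀ z, EndsAt z W → G.Foremost s z W

theorem prefixForemost_iff_take {G : TemporalGraph V} {s : V} {L : List (TArc V)} :
    G.PrefixForemost s L ↔
      ∀ (k : ℕ) (z : V), 0 < k → EndsAt z (L.take k) → G.Foremost s z (L.take k) := by
  refine ⟨fun h k z _ hz => h _ (List.take_prefix k L) z hz, fun h W hW z hz => ?_⟩
  have hpos : 0 < W.length := List.length_pos_iff.2 (ne_nil_of_endsAt hz)
  rw [List.prefix_iff_eq_take.1 hW] at hz ⊢
  exact h _ z hpos hz

theorem PrefixForemost.of_prefix {G : TemporalGraph V} {s : V} {W L : List (TArc V)}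
    (h : G.PrefixForemost s L) (hW : W <+: L) : G.PrefixForemost s W :=
  fun W' hW' => h W' (hW'.trans hW)

theorem PrefixForemost.append_exchange {G : TemporalGraph V} {s : V} {A A' D : List (TArc V)}
    (h : G.PrefixForemost s (A ++ D)) (h' : G.PrefixForemost s A')
    (hwalk : G.IsTWalk (A' ++ D)) (hs : StartsAt s A') : G.PrefixForemost s (A' ++ D) := by
  intro W hW z hz
  rcases hW.prefix_or_exists_eq_append with hWA' | ⟨T, rfl, hT⟩
  · exact h' W hWA' z hz
  · rcases eq_or_ne T [] with rfl | hTne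
    · rw [List.append_nil] at hz ⊢
      exact h' A' (List.prefix_refl A') z hz
    · have hlast : (A' ++ T).getLast? = (A ++ T).getLast? := by
        rw [List.getLast?_append_of_ne_nil _ hTne, List.getLast?_append_of_ne_nil _ hTne]
      have hzAT : EndsAt z (A ++ T) := by
        obtain ⟨e, he, hez⟩ := hz
        exact ⟨e, hlast ▸ he, hez⟩
      exact (h (A ++ T) ((List.prefix_append_right_inj A).2 hT) z hzAT).of_getLast?_eq
        (hwalk.of_prefix hW (ne_nil_of_endsAt hz)) (hs.append_right T) hlast

theorem isSPF_iff {G : TemporalGraph V} {s z : V} {L : List (TArc V)} :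
    G.IsSPF s z L ↔ G.IsTPath L ∧ StrictWalk L ∧ EndsAt z L ∧ G.PrefixForemost s L := by
  rw [IsSPF, ← prefixForemost_iff_take]
  exact ⟨fun ⟨hP, hS, hF, hPF⟩ => ⟨hP, hS, hF.1.2.2, hPF⟩,
    fun ⟨hP, hS, hz, hPF⟩ => ⟨hP, hS, hPF L (List.prefix_refl L) z hz, hPF⟩⟩

theorem IsSPF.startsAt {G : TemporalGraph V} {s z : V} {L : List (TArc V)}
    (h : G.IsSPF s z L) : StartsAt s L :=
  h.2.2.1.1.2.1

theorem IsSPF.of_prefix {G : TemporalGraph V} {s z z' : V} {W L : List (TArc V)}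
    (h : G.IsSPF s z L) (hW : W <+: L) (hz : EndsAt z' W) : G.IsSPF s z' W := by
  obtain ⟨⟨hwalk, hnodup⟩, hstrict, -, hPF⟩ := isSPF_iff.1 h
  have hWne := ne_nil_of_endsAt hz
  refine isSPF_iff.2 ⟨⟨hwalk.of_prefix hW hWne, ?_⟩, hstrict.of_prefix hW, hz, hPF.of_prefix hW⟩
  obtain ⟨T, rfl⟩ := hW
  rw [walkVerts_append hWne] at hnodup
  exact hnodup.of_append_left

theorem PrefixForemost.lt_arrival {G : TemporalGraph V} {s v w : V} {t : ℕ}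
    {A D W : List (TArc V)} (h : G.PrefixForemost s (A ++ D)) (hstrict : StrictWalk (A ++ D))
    (hA : EndsAtApp v t A) {d : TArc V} (hd : d ∈ D) (hdw : d.2.1 = w)
    (hW : G.IsWalkFromTo s w W) : t < arrival W := by
  obtain ⟨a, ha, -, rfl⟩ := hA
  obtain ⟨T, hT, hTd⟩ := List.exists_prefix_getLast?_eq_some hd
  have hlast : (A ++ T).getLast? = some d := by
    rw [List.getLast?_append, hTd]; rfl
  have hfore := h (A ++ T) ((List.prefix_append_right_inj A).2 hT) w ⟨d, hlast, hdw⟩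
  calc a.2.2 < d.2.2 := hstrict.lt_of_mem_append (List.mem_of_getLast? ha) hd
    _ = arrival (A ++ T) := (arrival_eq_of_getLast?_eq_some hlast).symm
    _ ≤ arrival W := hfore.2 W hW

theorem nodup_walkVerts_append_exchange {s : V} {A A' D : List (TArc V)}
    (h : (walkVerts (A ++ D)).Nodup) (hA : StartsAt s A) (h' : (walkVerts A').Nodup)
    (hA' : StartsAt s A') (hdisj : ∀ e ∈ A', ∀ d ∈ D, e.2.1 ≠ d.2.1) :
    (walkVerts (A' ++ D)).Nodup := by
  rw [walkVerts_append (ne_nil_of_startsAt hA)] at h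
  rw [walkVerts_append (ne_nil_of_startsAt hA'), List.nodup_append]
  refine ⟨h', h.of_append_right, fun w hw w' hw' hww' => ?_⟩
  obtain ⟨d, hd, rfl⟩ := List.mem_map.1 hw'
  subst hww'
  rcases (mem_walkVerts_iff hA').1 hw with rfl | ⟨e, he, hed⟩
  · exact List.disjoint_of_nodup_append h (mem_walkVerts_of_startsAt hA)
      (List.mem_map_of_mem hd)
  · exact hdisj e he d hd hed

theorem IsSPF.append_exchange {G : TemporalGraph V} {s z v : V} {t : ℕ}
    {A A' D : List (TArc V)} (h : G.IsSPF s z (A ++ D)) (hA : EndsAtApp v t A)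
    (h' : G.IsSPF s v A') (hA' : EndsAtApp v t A') : G.IsSPF s z (A' ++ D) := by
  obtain ⟨⟨hwalk, hnodup⟩, hstrict, hz, hPF⟩ := isSPF_iff.1 h
  obtain ⟨⟨hwalk', hnodup'⟩, hstrict', -, hPF'⟩ := isSPF_iff.1 h'
  have hs := h.startsAt
  have hs' := h'.startsAt
  have hlast (R : V × ℕ → TArc V → Prop) :
      ∀ a' ∈ A'.getLast?, ∃ a ∈ A.getLast?, ∀ d, R a.2 d → R a'.2 d := by
    obtain ⟨a, ha, hav, hat⟩ := hA
    obtain ⟨a', ha', ha'v, ha't⟩ := hA'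
    intro b hb
    have haa' : a.2 = a'.2 := Prod.ext (hav.trans ha'v.symm) (hat.trans ha't.symm)
    rw [Option.mem_unique hb ha']
    exact ⟨a, ha, fun _ hd => haa' ▸ hd⟩
  have hwalkAD : G.IsTWalk (A' ++ D) := by
    refine ⟨by simp [hwalk'.1], fun e he => ?_, ?_⟩
    · rcases List.mem_append.1 he with he | he
      · exact hwalk'.2.1 e he
      · exact hwalk.2.1 e (List.mem_append_right A he)
    · exact List.isChain_append_of_getLast?_imp hwalk.2.2 hwalk'.2.2
        (hlast fun p f => p.1 = f.1 ∧ p.2 ≤ f.2.2)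
  have hstrictAD : StrictWalk (A' ++ D) :=
    List.isChain_append_of_getLast?_imp hstrict hstrict' (hlast fun p f => p.2 < f.2.2)
  have hdisj : ∀ e ∈ A', ∀ d ∈ D, e.2.1 ≠ d.2.1 := by
    intro e he d hd hed
    obtain ⟨W, hW, hWt⟩ := hwalk'.exists_isWalkFromTo_arrival_le hs' hA' he
    exact absurd (hPF.lt_arrival hstrict hA hd hed.symm hW) (not_lt.2 hWt)
  refine isSPF_iff.2 ⟨⟨hwalkAD, ?_⟩, hstrictAD, ?_, hPF.append_exchange hPF' hwalkAD hs'⟩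
  · exact nodup_walkVerts_append_exchange hnodup (hs.of_prefix (List.prefix_append A D)
      (ne_nil_of_endsAt hA.endsAt)) hnodup' hs' hdisj
  · exact hz.append_exchange hA.endsAt hA'.endsAt

theorem spf_closure_general {V : Type*} (G : TemporalGraph V) :
    (∀ (s z : V) (L : List (TArc V)), G.IsSPF s z L →
      ∀ (k : ℕ) (z' : V), 0 < k → EndsAt z' (L.take k) → G.IsSPF s z' (L.take k)) ∧
    (∀ (s z v : V) (t : ℕ) (L : List (TArc V)), G.IsSPF s z L →
      ∀ (i : ℕ) (e : TArc V), L[i]? = some e → e.2 = (v, t) →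
        ∀ L', G.IsSPF s v L' → EndsAtApp v t L' →
          G.IsSPF s z (L' ++ L.drop (i + 1))) := by
  refine ⟨fun s z L hL k z' _ hz' => hL.of_prefix (List.take_prefix k L) hz', ?_⟩
  intro s z v t L hL i e hie hevt L' hL' hL't
  have hAt : EndsAtApp v t (L.take (i + 1)) := by
    refine ⟨e, ?_, by rw [hevt], by rw [hevt]⟩
    rw [List.getLast?_take]
    simp [hie]
  rw [← List.take_append_drop (i + 1) L] at hL
  exact hL.append_exchange hAt hL' hL't

/-- Strict prefix-foremost temporal paths are closed under the
operations required for prefix-compatibility: (1) every (nonempty) prefix of a strict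
prefix-foremost temporal path is a strict prefix-foremost temporal path; and (2) if a
strict prefix-foremost `s`-`z`-path `P` goes through a vertex appearance `(v, t)` and
`P'` is any strict prefix-foremost `s`-path ending at the vertex appearance `(v, t)`,
then the concatenation of `P'` with the suffix of `P` starting at `(v, t)` is again a
strict prefix-foremost `s`-`z`-path (in particular it is a path, not merely a walk). -/
theorem spf_closure {V : Type*} [Fintype V] (G : TemporalGraph V) :
    (∀ (s z : V) (L : List (TArc V)), G.IsSPF s z L →
      ∀ (k : ℕ) (z' : V), 0 < k → EndsAt z' (L.take k) → G.IsSPF s z' (L.take k)) ∧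
    (∀ (s z v : V) (t : ℕ) (L : List (TArc V)), G.IsSPF s z L →
      ∀ (i : ℕ) (e : TArc V), L[i]? = some e → e.2 = (v, t) →
        ∀ L', G.IsSPF s v L' → EndsAtApp v t L' →
          G.IsSPF s z (L' ++ L.drop (i + 1))) :=
  spf_closure_general G

end TemporalGraph
end

section
/- Let c be a prefix-compatible cost function on a temporal graph 𝒢, fix a source s, and suppose that the induced set of optimal temporal walks 𝒲^(c) contains two walks starting at s such that one visits vertex appearance (v,t) before vertex appearance (w,t̂) and the other visits (w,t̂) before (v,t) (that is, the predecessor relation of s with respect to 𝒲^(c) is cyclic). Then there exists a c-optimal walk starting at s that visits the same vertex appearance twice; consequently, c is not finite. -/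
open scoped Classical

/-!
Splicing the prefix of the second walk up to `(v, t)` into the first walk at `(v, t)` yields,
by prefix-exchangeability, an optimal walk from `s` that visits `(w, t̂)` twice. Prefix-optimality
makes the prefix ending at the second visit an optimal walk to `(w, t̂)`, so exchanging it in at
the first visit repeats the closed segment between the two visits; iterating gives optimal walks
of unbounded length.
-/

namespace List

variable {α β : Type*}

theorem not_nodup_map_iff {g : α → β} {l : List α} :
    ¬(l.map g).Nodup ↔
      ∃ (p q : ℕ) (a b : α), p < q ∧ l[p]? = some a ∧ l[q]? = some b ∧ g a = g b := by
  simp only [nodup_iff_getElem?_ne_getElem?, length_map, getElem?_map, not_forall,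
    not_not, exists_prop]
  constructor
  · rintro ⟨p, q, hpq, hq, heq⟩
    obtain ⟨b, hb⟩ := Option.isSome_iff_exists.1 (isSome_getElem? l q ▸ hq)
    obtain ⟨a, ha⟩ : ∃ a, l[p]? = some a :=
      Option.isSome_iff_exists.1 (by simp [getElem?_eq_getElem (hpq.trans hq)])
    rw [ha, hb] at heq
    exact ⟨p, q, a, b, hpq, ha, hb, Option.some_injective _ heq⟩
  · rintro ⟨p, q, a, b, hpq, ha, hb, hab⟩
    exact ⟨p, q, hpq, (getElem?_eq_some_iff.1 hb).1, by rw [ha, hb]; simp [hab]⟩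

theorem getElem?_take_succ_append_of_le {l m : List α} {j k : ℕ} (hk : k ≤ j)
    (hj : j < l.length) : (l.take (j + 1) ++ m)[k]? = l[k]? := by
  rw [getElem?_append_left (by simp only [length_take]; omega),
    getElem?_take_of_lt (by omega)]

theorem getElem?_take_succ_append_add {l m : List α} {j : ℕ} (hj : j < l.length) (k : ℕ) :
    (l.take (j + 1) ++ m)[j + 1 + k]? = m[k]? := by
  rw [getElem?_append_right (by simp only [length_take]; omega)]
  congr 1
  simp only [length_take]
  omega

end List

namespace TemporalGraph

variable {V : Type*} {G : TemporalGraph V} {c : CostFn V} {s : V}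

theorem StartsAt.take_succ_append {K : List (TArc V)} (hs : StartsAt s K) (n : ℕ)
    (M : List (TArc V)) : StartsAt s (K.take (n + 1) ++ M) := by
  obtain ⟨a, ha, has⟩ := hs
  refine ⟨a, ?_, has⟩
  rw [List.head?_append, List.head?_take, if_neg n.succ_ne_zero, Option.mem_def.1 ha]
  rfl

theorem isTWalk_of_mem_optWalks {K : List (TArc V)} (hK : K ∈ G.OptWalks c) : G.IsTWalk K := by
  obtain ⟨_, _, hopt⟩ := hK
  exact hopt.1.1

theorem exists_startsAt_of_mem_optWalks {K : List (TArc V)} (hK : K ∈ G.OptWalks c) :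
    ∃ s, StartsAt s K := by
  obtain ⟨s, _, hopt⟩ := hK
  exact ⟨s, hopt.1.2.1⟩

theorem IsTWalk.isWalkFromToApp_take {K : List (TArc V)} (hK : G.IsTWalk K)
    (hs : StartsAt s K) {j : ℕ} {f : TArc V} (hf : K[j]? = some f) :
    G.IsWalkFromToApp s f.2.1 f.2.2 (K.take (j + 1)) := by
  refine ⟨⟨?_, fun e he => hK.2.1 e (List.mem_of_mem_take he), hK.2.2.take _⟩,
    by simpa using hs.take_succ_append j [], f, ?_, rfl, rfl⟩
  · simpa using hK.1
  · rw [List.getLast?_take, if_neg j.succ_ne_zero, Nat.add_sub_cancel, hf]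
    rfl

namespace PrefixCompatible

variable (hpc : G.PrefixCompatible c)
include hpc

theorem take_append_drop_mem_optWalks {L₁ L₂ : List (TArc V)} (h₁ : L₁ ∈ G.OptWalks c)
    (h₂ : L₂ ∈ G.OptWalks c) (hs₁ : StartsAt s L₁) (hs₂ : StartsAt s L₂) {i j : ℕ}
    {e f : TArc V} (he : L₁[i]? = some e) (hf : L₂[j]? = some f) (hef : e.2 = f.2) :
    L₂.take (j + 1) ++ L₁.drop (i + 1) ∈ G.OptWalks c := by
  have hprefix := (isTWalk_of_mem_optWalks h₂).isWalkFromToApp_take hs₂ hf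
  have hcost := hpc.1 L₂ h₂ s hs₂ j f hf
  rw [← hef] at hprefix hcost
  exact hpc.2 L₁ h₁ s hs₁ i e he _ hprefix hcost

theorem exists_longer_of_not_nodup {K : List (TArc V)} (hK : K ∈ G.OptWalks c)
    (hs : StartsAt s K) (hdup : ¬(K.map Prod.snd).Nodup) :
    ∃ K' ∈ G.OptWalks c, StartsAt s K' ∧ ¬(K'.map Prod.snd).Nodup ∧
      K.length < K'.length := by
  obtain ⟨p, q, e, f, hpq, he, hf, hef⟩ := List.not_nodup_map_iff.1 hdup
  have hq : q < K.length := (List.getElem?_eq_some_iff.1 hf).1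
  refine ⟨K.take (q + 1) ++ K.drop (p + 1),
    hpc.take_append_drop_mem_optWalks hK hK hs hs he hf hef, hs.take_succ_append q _,
    List.not_nodup_map_iff.2 ⟨p, q, e, f, hpq, ?_, ?_, hef⟩, ?_⟩
  · rwa [List.getElem?_take_succ_append_of_le hpq.le hq]
  · rwa [List.getElem?_take_succ_append_of_le le_rfl hq]
  · simp only [List.length_append, List.length_take, List.length_drop]
    omega

theorem optWalks_infinite_of_not_nodup {K : List (TArc V)} (hK : K ∈ G.OptWalks c)
    (hdup : ¬(K.map Prod.snd).Nodup) : (G.OptWalks c).Infinite := by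
  obtain ⟨s, hs⟩ := exists_startsAt_of_mem_optWalks hK
  set S := {K ∈ G.OptWalks c | StartsAt s K ∧ ¬(K.map Prod.snd).Nodup}
  have hunbounded : ∀ n, ∃ K ∈ S, n ≤ K.length := by
    intro n
    induction n with
    | zero => exact ⟨K, ⟨hK, hs, hdup⟩, Nat.zero_le _⟩
    | succ n ih =>
      obtain ⟨L, ⟨hL, hsL, hdupL⟩, hn⟩ := ih
      obtain ⟨L', hL', hsL', hdupL', hlt⟩ := hpc.exists_longer_of_not_nodup hL hsL hdupL
      exact ⟨L', ⟨hL', hsL', hdupL'⟩, by omega⟩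
  have hlengths : (List.length '' S).Infinite := by
    refine Set.infinite_of_not_bddAbove fun ⟨n, hn⟩ => ?_
    obtain ⟨L, hLS, hlen⟩ := hunbounded (n + 1)
    have := hn ⟨L, hLS, rfl⟩
    omega
  exact (hlengths.of_image _).mono fun _ h => h.1

end PrefixCompatible

theorem cyclic_predecessors_not_finite_general {V : Type*} (G : TemporalGraph V)
    (c : CostFn V) (hpc : G.PrefixCompatible c) (s v w : V) (t that : ℕ)
    (L₁ L₂ : List (TArc V)) (h₁ : L₁ ∈ G.OptWalks c) (h₂ : L₂ ∈ G.OptWalks c)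
    (hs₁ : StartsAt s L₁) (hs₂ : StartsAt s L₂)
    (hbefore₁ : ∃ (i j : ℕ) (e f : TArc V), i < j ∧ L₁[i]? = some e ∧ L₁[j]? = some f ∧
      e.2 = (v, t) ∧ f.2 = (w, that))
    (hbefore₂ : ∃ (i j : ℕ) (e f : TArc V), i < j ∧ L₂[i]? = some e ∧ L₂[j]? = some f ∧
      e.2 = (w, that) ∧ f.2 = (v, t)) :
    (∃ L ∈ G.OptWalks c, StartsAt s L ∧ ¬ (L.map Prod.snd).Nodup) ∧
      ¬ G.FiniteCost c := by
  obtain ⟨i₁, j₁, e₁, f₁, hij₁, he₁, hf₁, he₁v, hf₁w⟩ := hbefore₁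
  obtain ⟨i₂, j₂, e₂, f₂, hij₂, he₂, hf₂, he₂w, hf₂v⟩ := hbefore₂
  have hj₂ : j₂ < L₂.length := (List.getElem?_eq_some_iff.1 hf₂).1
  set K := L₂.take (j₂ + 1) ++ L₁.drop (i₁ + 1)
  have hK : K ∈ G.OptWalks c :=
    hpc.take_append_drop_mem_optWalks h₁ h₂ hs₁ hs₂ he₁ hf₂ (he₁v.trans hf₂v.symm)
  have hfirst : K[i₂]? = some e₂ := by
    rwa [List.getElem?_take_succ_append_of_le hij₂.le hj₂]
  have hsecond : K[j₂ + 1 + (j₁ - (i₁ + 1))]? = some f₁ := by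
    rwa [List.getElem?_take_succ_append_add hj₂, List.getElem?_drop, Nat.add_sub_of_le hij₁]
  have hdup : ¬(K.map Prod.snd).Nodup := List.not_nodup_map_iff.2
    ⟨_, _, e₂, f₁, by omega, hfirst, hsecond, he₂w.trans hf₁w.symm⟩
  exact ⟨⟨K, hK, hs₂.take_succ_append j₂ _, hdup⟩, hpc.optWalks_infinite_of_not_nodup hK hdup⟩

/-- Let `c` be a prefix-compatible cost function on a temporal graph
`𝒢`, fix a source `s`, and suppose that `𝒲^(c)` contains two walks starting at `s` such
that one visits the vertex appearance `(v, t)` before the vertex appearance `(w, t̂)` and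
the other visits `(w, t̂)` before `(v, t)` (the predecessor relation of `s` is cyclic).
Then there exists a `c`-optimal walk starting at `s` that visits the same vertex
appearance twice; consequently, `c` is not finite. -/
theorem cyclic_predecessors_not_finite {V : Type*} [Fintype V] (G : TemporalGraph V)
    (c : CostFn V) (hpc : G.PrefixCompatible c) (s v w : V) (t that : ℕ)
    (L₁ L₂ : List (TArc V)) (h₁ : L₁ ∈ G.OptWalks c) (h₂ : L₂ ∈ G.OptWalks c)
    (hs₁ : StartsAt s L₁) (hs₂ : StartsAt s L₂)
    (hbefore₁ : ∃ (i j : ℕ) (e f : TArc V), i < j ∧ L₁[i]? = some e ∧ L₁[j]? = some f ∧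
      e.2 = (v, t) ∧ f.2 = (w, that))
    (hbefore₂ : ∃ (i j : ℕ) (e f : TArc V), i < j ∧ L₂[i]? = some e ∧ L₂[j]? = some f ∧
      e.2 = (w, that) ∧ f.2 = (v, t)) :
    (∃ L ∈ G.OptWalks c, StartsAt s L ∧ ¬ (L.map Prod.snd).Nodup) ∧
      ¬ G.FiniteCost c :=
  cyclic_predecessors_not_finite_general G c hpc s v w t that L₁ L₂ h₁ h₂ hs₁ hs₂ hbefore₁ hbefore₂

end TemporalGraph
end
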